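/- arXiv:2507.19101 — 6 statements merged into one kernel-verified Lean document; each statement's English description precedes it below -/
import Mathlib

section
/- Let H be an inner product space and L a linear subspace of H. Then L is weakly closed if and only if L = L^⊥⊥. -/
local notation "⟪" x ", " y "⟫" => @inner ℂ _ _ x y

/-- The weak topology on an inner product space. -/
noncomputable def weakTopology (H : Type*) [NormedAddCommGroup H] [InnerProductSpace ℂ H] :
    TopologicalSpace H :=
  ⨅ k : H, TopologicalSpace.induced (fun h : H => ⟪h, k⟫) inferInstance

/-- The orthogonal companion of a subset `S`. -/
def orthCompanion {H : Type*} [NormedAddCommGroup H] [InnerProductSpace ℂ H]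
    (S : Set H) : Set H :=
  {k : H | ∀ h ∈ S, ⟪h, k⟫ = 0}

/-- A linear subspace `L` of an inner product space is weakly closed
iff `L = L^⊥⊥`. -/
theorem weaklyClosed_iff_biorthogonal
    {H : Type*} [NormedAddCommGroup H] [InnerProductSpace ℂ H] (L : Submodule ℂ H) :
    @IsClosed H (weakTopology H) (L : Set H) ↔
      (L : Set H) = orthCompanion (orthCompanion (L : Set H)) := by
  classical
  letI := weakTopology H
  constructor
  · intro hClosed
    refine Set.Subset.antisymm (fun m hm k hk => ?_) (fun m hm => ?_)
    · rw [← inner_conj_symm, hk m hm, map_zero]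
    · by_contra hm'
      have hnhds : (L : Set H)ᶜ ∈ @nhds H (weakTopology H) m :=
        hClosed.isOpen_compl.mem_nhds hm'
      rw [weakTopology, nhds_iInf] at hnhds
      simp only [nhds_induced] at hnhds
      obtain ⟨I, hIfin, V, hV, hVeq⟩ := Filter.mem_iInf.mp hnhds
      haveI : Fintype I := hIfin.fintype
      have key : ∀ h : H, h ∈ L → ∃ i : I, ⟪(i : H), h⟫ ≠ ⟪(i : H), m⟫ := by
        intro h hh
        by_contra hcon
        push_neg at hcon
        have hmem : h ∈ (L : Set H)ᶜ := by
          rw [hVeq]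
          refine Set.mem_iInter.mpr fun i => ?_
          obtain ⟨U, hU, hUsub⟩ := Filter.mem_comap.mp (hV i)
          apply hUsub
          have heq : ⟪h, (i : H)⟫ = ⟪m, (i : H)⟫ := by
            rw [← inner_conj_symm h, ← inner_conj_symm m, hcon i]
          simp only [Set.mem_preimage, heq]
          exact mem_of_mem_nhds hU
        exact hmem hh
      let T : H →ₗ[ℂ] (I → ℂ) := LinearMap.pi (fun i : I => innerₛₗ ℂ (i : H))
      have hTm : T m ∉ L.map T := by
        rintro ⟨h, hh, hEq⟩
        obtain ⟨i, hi⟩ := key h hh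
        exact hi (congrFun hEq i)
      obtain ⟨φ, hφm, hφL⟩ := (L.map T).exists_dual_map_eq_bot_of_notMem hTm inferInstance
      have hφ0 : ∀ h ∈ L, φ (T h) = 0 := by
        intro h hh
        have hmem : φ (T h) ∈ (L.map T).map φ := ⟨T h, ⟨h, hh, rfl⟩, rfl⟩
        rwa [hφL, Submodule.mem_bot] at hmem
      set c : I → ℂ := fun i => φ (fun j => if i = j then 1 else 0) with hc
      set k : H := ∑ i : I, (starRingEnd ℂ (c i)) • (i : H) with hkdef
      have hinner : ∀ h : H, ⟪k, h⟫ = φ (T h) := by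
        intro h
        rw [hkdef, sum_inner, LinearMap.pi_apply_eq_sum_univ φ (T h)]
        refine Finset.sum_congr rfl fun i _ => ?_
        rw [inner_smul_left]
        simp only [starRingEnd_self_apply, smul_eq_mul]
        rw [mul_comm]
        rfl
      have hkL : k ∈ orthCompanion (L : Set H) := by
        intro h hh
        rw [← inner_conj_symm, hinner h, hφ0 h hh, map_zero]
      have hfin := hm k hkL
      rw [hinner m] at hfin
      exact hφm hfin
  · intro hEq
    rw [hEq]
    have hset : orthCompanion (orthCompanion (L : Set H)) =
        ⋂ k ∈ orthCompanion (L : Set H), (fun m : H => ⟪m, k⟫) ⁻¹' {0} := by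
      ext m
      simp only [orthCompanion, Set.mem_setOf_eq, Set.mem_iInter, Set.mem_preimage,
        Set.mem_singleton_iff]
      constructor
      · intro hA k hk
        rw [← inner_conj_symm, hA k hk, map_zero]
      · intro hA k hk
        rw [← inner_conj_symm, hA k hk, map_zero]
    rw [hset]
    refine isClosed_iInter fun k => isClosed_iInter fun _ => ?_
    have hcont : @Continuous H ℂ (weakTopology H) _ (fun m : H => ⟪m, k⟫) := by
      rw [weakTopology]
      exact continuous_iInf_dom continuous_induced_dom
    exact IsClosed.preimage hcont isClosed_singleton
end

section
/- Let H = ⋃_{λ∈Λ} H_λ be a locally Hilbert space arising from a strictly inductive system of Hilbert spaces (H_λ). Then for each λ ∈ Λ there exists a unique Hermitian projection P_λ : H → H with range H_λ; in particular H = H_λ ⊕ H_λ^⊥. -/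
local notation "⟪" x ", " y "⟫" => @inner ℂ _ _ x y

namespace LinearMap

variable {𝕜 E : Type*} [RCLike 𝕜] [NormedAddCommGroup E] [InnerProductSpace 𝕜 E]

theorem isSymmetricProjection_iff_apply {P : E →ₗ[𝕜] E} :
    P.IsSymmetricProjection ↔
      (∀ x, P (P x) = P x) ∧ ∀ x y, inner 𝕜 (P x) y = inner 𝕜 x (P y) := by
  rw [isSymmetricProjection_iff, IsIdempotentElem, LinearMap.ext_iff]
  rfl

theorem existsUnique_isSymmetricProjection_range_eq (K : Submodule 𝕜 E)
    [K.HasOrthogonalProjection] :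
    ∃! P : E →ₗ[𝕜] E, P.IsSymmetricProjection ∧ range P = K := by
  refine ⟨K.starProjection, ⟨K.isSymmetricProjection_starProjection, ?_⟩, ?_⟩
  · exact K.range_starProjection
  · rintro Q ⟨hQ, hQrange⟩
    rw [hQ.ext_iff K.isSymmetricProjection_starProjection, hQrange]
    exact K.range_starProjection.symm

end LinearMap

theorem locallyHilbert_hermitian_projection_general
    {Λ H : Type*}
    [NormedAddCommGroup H] [InnerProductSpace ℂ H]
    (Hs : Λ → Submodule ℂ H)
    (hcomplete : ∀ l, IsComplete (Hs l : Set H)) :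
    ∀ l : Λ,
      (∃! P : H →ₗ[ℂ] H, (∀ h, P (P h) = P h) ∧
          (∀ h k : H, ⟪P h, k⟫ = ⟪h, P k⟫) ∧ LinearMap.range P = Hs l) ∧
      (∀ h : H, ∃ s ∈ Hs l, ∃ t : H, (∀ u ∈ Hs l, ⟪u, t⟫ = 0) ∧ h = s + t) := by
  intro l
  have : CompleteSpace (Hs l) := (hcomplete l).completeSpace_coe
  -- `t ∈ (Hs l)ᗮ` unfolds definitionally to the orthogonality condition.
  refine ⟨?_, (Hs l).exists_add_mem_mem_orthogonal⟩
  simpa only [LinearMap.isSymmetricProjection_iff_apply, and_assoc] using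
    LinearMap.existsUnique_isSymmetricProjection_range_eq (Hs l)

/-- Let `H = ⋃ H_λ` be a locally Hilbert space arising from a strictly inductive
system of Hilbert spaces (each `H_λ` a complete subspace, increasing along the directed set,
covering `H`). Then for each `λ` there is a unique Hermitian projection of `H` onto `H_λ`;
in particular `H = H_λ ⊕ H_λ^⊥`. -/
theorem locallyHilbert_hermitian_projection
    {Λ H : Type*} [Preorder Λ] [Nonempty Λ]
    [NormedAddCommGroup H] [InnerProductSpace ℂ H]
    (hdir : ∀ a b : Λ, ∃ c, a ≤ c ∧ b ≤ c)
    (Hs : Λ → Submodule ℂ H)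
    (hmono : ∀ {a b : Λ}, a ≤ b → Hs a ≤ Hs b)
    (hcover : ∀ h : H, ∃ l, h ∈ Hs l)
    (hcomplete : ∀ l, IsComplete (Hs l : Set H)) :
    ∀ l : Λ,
      (∃! P : H →ₗ[ℂ] H, (∀ h, P (P h) = P h) ∧
          (∀ h k : H, ⟪P h, k⟫ = ⟪h, P k⟫) ∧ LinearMap.range P = Hs l) ∧
      (∀ h : H, ∃ s ∈ Hs l, ∃ t : H, (∀ u ∈ Hs l, ⟪u, t⟫ = 0) ∧ h = s + t) :=
  locallyHilbert_hermitian_projection_general Hs hcomplete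
end

section
/- Let ((X_λ, Ω_λ, μ_λ))_{λ∈Λ} be a strictly inductive system of measure spaces, let Ω̃ = {A ⊆ X : A ∩ X_λ ∈ Ω_λ for all λ} where X = ⋃_λ X_λ, and define μ̃(A) = sup_{λ∈Λ} μ_λ(A ∩ X_λ) for A ∈ Ω̃. Then μ̃ is a (countably additive) measure on (X, Ω̃). -/
open MeasureTheory

/-- For a strictly inductive system of measure spaces, the set function
`μ̃(A) = ⨆_λ μ_λ(A ∩ X_λ)` is a countably additive measure on the σ-algebra
`Ω̃ = {A : A ∩ X_λ ∈ Ω_λ for all λ}`. -/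
theorem tildeMu_is_measure {Λ E : Type*} [Preorder Λ] [Nonempty Λ]
    (hdir : ∀ a b : Λ, ∃ c, a ≤ c ∧ b ≤ c)
    (X : Λ → Set E) (Ω : Λ → Set (Set E)) (μ : Λ → Set E → ENNReal)
    (hsub : ∀ l, ∀ A ∈ Ω l, A ⊆ X l)
    (htop : ∀ l, X l ∈ Ω l)
    (hdiff : ∀ l, ∀ A ∈ Ω l, X l \ A ∈ Ω l)
    (hiUnion : ∀ l (f : ℕ → Set E), (∀ n, f n ∈ Ω l) → (⋃ n, f n) ∈ Ω l)
    (hmonoX : ∀ {a b : Λ}, a ≤ b → X a ⊆ X b)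
    (htrace : ∀ {a b : Λ}, a ≤ b → Ω a = (fun A => A ∩ X a) '' Ω b)
    (hΩmono : ∀ {a b : Λ}, a ≤ b → Ω a ⊆ Ω b)
    (hcover : ∀ x : E, ∃ l, x ∈ X l)
    (hzero : ∀ l, μ l ∅ = 0)
    (hsigma : ∀ l (f : ℕ → Set E), (∀ n, f n ∈ Ω l) →
      Pairwise (Function.onFun Disjoint f) → μ l (⋃ n, f n) = ∑' n, μ l (f n))
    (hcompat : ∀ {a b : Λ}, a ≤ b → ∀ U ∈ Ω a, μ a U = μ b U) :
    ∃ (m : MeasurableSpace E) (ν : @Measure E m),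
      (∀ A : Set E, MeasurableSet[m] A ↔ ∀ l, A ∩ X l ∈ Ω l) ∧
      (∀ A : Set E, (∀ l, A ∩ X l ∈ Ω l) → ν A = ⨆ l, μ l (A ∩ X l)) := by
  -- ∅ belongs to every Ω l
  have hempty : ∀ l, (∅ : Set E) ∈ Ω l := fun l => by
    simpa using hdiff l (X l) (htop l)
  -- binary unions
  have hunion2 : ∀ l, ∀ A ∈ Ω l, ∀ B ∈ Ω l, A ∪ B ∈ Ω l := by
    intro l A hA B hB
    have := hiUnion l (fun n => if n = 0 then A else if n = 1 then B else ∅)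
      (by intro n; rcases n with _ | _ | n
          · simpa
          · simpa
          · simpa using hempty l)
    have hU : (⋃ n, (fun n => if n = 0 then A else if n = 1 then B else ∅) n) = A ∪ B := by
      apply Set.Subset.antisymm
      · intro x hx
        rcases Set.mem_iUnion.1 hx with ⟨n, hn⟩
        rcases n with _ | _ | n <;> simp_all
      · intro x hx
        rcases hx with hx | hx
        · exact Set.mem_iUnion.2 ⟨0, by simpa⟩
        · exact Set.mem_iUnion.2 ⟨1, by simpa⟩
    rwa [hU] at this
  -- binary intersections
  have hinter2 : ∀ l, ∀ A ∈ Ω l, ∀ B ∈ Ω l, A ∩ B ∈ Ω l := by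
    intro l A hA B hB
    have h := hdiff l _ (hunion2 l _ (hdiff l A hA) _ (hdiff l B hB))
    have : X l \ ((X l \ A) ∪ (X l \ B)) = A ∩ B := by
      have hAX := hsub l A hA
      have hBX := hsub l B hB
      ext x
      constructor
      · rintro ⟨hx, hx2⟩
        simp only [Set.mem_union, Set.mem_diff, not_or, not_and, not_not] at hx2
        exact ⟨hx2.1 hx, hx2.2 hx⟩
      · rintro ⟨hxA, hxB⟩
        refine ⟨hAX hxA, ?_⟩
        simp only [Set.mem_union, Set.mem_diff, not_or, not_and, not_not]
        exact ⟨fun _ => hxA, fun _ => hxB⟩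
    rwa [this] at h
  -- monotonicity of each μ l on Ω l
  have hmono : ∀ l, ∀ U ∈ Ω l, ∀ V ∈ Ω l, U ⊆ V → μ l U ≤ μ l V := by
    intro l U hU V hV hUV
    set g : ℕ → Set E := fun n => if n = 0 then U else if n = 1 then V \ U else ∅ with hg
    have hgm : ∀ n, g n ∈ Ω l := by
      intro n
      rcases n with _ | _ | n
      · simpa [hg]
      · have : V \ U = V ∩ (X l \ U) := by
          ext x
          simp only [Set.mem_diff, Set.mem_inter_iff]
          exact ⟨fun ⟨h1, h2⟩ => ⟨h1, hsub l V hV h1, h2⟩, fun ⟨h1, _, h3⟩ => ⟨h1, h3⟩⟩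
        simpa [hg, this] using hinter2 l V hV _ (hdiff l U hU)
      · simpa [hg] using hempty l
    have hgd : Pairwise (Function.onFun Disjoint g) := by
      intro i j hij
      have key : ∀ a b : ℕ, a < b → Disjoint (g a) (g b) := by
        intro a b hab
        rcases a with _ | _ | a
        · rcases b with _ | _ | b
          · omega
          · simp only [hg]
            exact Set.disjoint_left.2 fun x hx hx2 => hx2.2 hx
          · simp [hg]
        · rcases b with _ | _ | b
          · omega
          · omega
          · simp [hg]
        · simp [hg]
      rcases lt_or_gt_of_ne hij with h | h
      · exact key i j h
      · exact (key j i h).symm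
    have hUg : (⋃ n, g n) = V := by
      apply Set.Subset.antisymm
      · intro x hx
        rcases Set.mem_iUnion.1 hx with ⟨n, hn⟩
        rcases n with _ | _ | n
        · exact hUV (by simpa [hg] using hn)
        · exact (by simpa [hg] using hn : x ∈ V \ U).1
        · simp [hg] at hn
      · intro x hx
        by_cases hxU : x ∈ U
        · exact Set.mem_iUnion.2 ⟨0, by simpa [hg]⟩
        · exact Set.mem_iUnion.2 ⟨1, by simpa [hg] using ⟨hx, hxU⟩⟩
    have := hsigma l g hgm hgd
    rw [hUg] at this
    calc μ l U = μ l (g 0) := by simp [hg]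
      _ ≤ ∑' n, μ l (g n) := ENNReal.le_tsum 0
      _ = μ l V := this.symm
    -- monotone in l
  have hMl : ∀ (A : Set E), (∀ l, A ∩ X l ∈ Ω l) →
      Monotone (fun l => μ l (A ∩ X l)) := by
    intro A hA a b hab
    have h1 : A ∩ X a ∈ Ω b := hΩmono hab (hA a)
    have h2 : μ a (A ∩ X a) = μ b (A ∩ X a) := hcompat hab _ (hA a)
    have h3 : μ b (A ∩ X a) ≤ μ b (A ∩ X b) :=
      hmono b _ h1 _ (hA b) (Set.inter_subset_inter_right A (hmonoX hab))
    simpa [h2] using h3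
  -- the σ-algebra
  letI m : MeasurableSpace E := MeasurableSpace.mk (fun A => ∀ l, A ∩ X l ∈ Ω l)
      (fun l => by simpa using hempty l)
      (fun A hA l => by
        have h : Aᶜ ∩ X l = X l \ (A ∩ X l) := by
          ext x; simp only [Set.mem_inter_iff, Set.mem_compl_iff, Set.mem_diff]; tauto
        rw [h]; exact hdiff l _ (hA l))
      (fun f hf l => by
        rw [Set.iUnion_inter]; exact hiUnion l _ (fun n => hf n l))
  refine ⟨m, Measure.ofMeasurable (fun A _ => ⨆ l, μ l (A ∩ X l))
      (by simp [hzero]) ?_, fun A => Iff.rfl, fun A hA => Measure.ofMeasurable_apply A hA⟩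
  intro f hf hd
  symm
  have step1 : ∀ l, μ l ((⋃ n, f n) ∩ X l) = ∑' n, μ l (f n ∩ X l) := by
    intro l
    rw [Set.iUnion_inter]
    exact hsigma l _ (fun n => hf n l)
      (fun i j hij => ((hd hij).inter_left _).inter_right _)
  calc (∑' n, ⨆ l, μ l (f n ∩ X l))
      = ⨆ l, ∑' n, μ l (f n ∩ X l) := by
        apply le_antisymm
        · rw [ENNReal.tsum_eq_iSup_sum]
          refine iSup_le fun s => ?_
          rw [ENNReal.finsetSum_iSup (fun i j => by
            rcases hdir i j with ⟨k, hik, hjk⟩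
            exact ⟨k, fun n => ⟨hMl (f n) (hf n) hik, hMl (f n) (hf n) hjk⟩⟩)]
          exact iSup_mono fun l => ENNReal.sum_le_tsum s
        · exact iSup_le fun l => ENNReal.tsum_le_tsum fun n => le_iSup (fun l => μ l (f n ∩ X l)) l
    _ = ⨆ l, μ l ((⋃ n, f n) ∩ X l) := by simp_rw [step1]
end

section
/- Let (X, Ω̃, μ̃) be the measure space extension of the inductive limit of a strictly inductive system of measure spaces ((X_λ, Ω_λ, μ_λ))_{λ∈Λ}, where μ̃(A) = sup_λ μ_λ(A ∩ X_λ). Then the subspace of L²(X, μ̃) consisting of (classes of) functions vanishing μ̃-a.e. outside some X_λ and square-integrable on that X_λ is dense in L²(X, μ̃). Equivalently, for any φ ∈ L²(X, μ̃), the functions φ·χ_{X_λ} converge to φ in L²-norm along the directed set Λ. -/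
open MeasureTheory Filter Topology
open scoped ENNReal

/-!
Since `μ` is the supremum of its restrictions to the directed family `X λ`, the same holds for
the integral of every simple function (a finite sum of values times measures), hence for every
lower Lebesgue integral. Applied to `‖φ‖²`, the integrals over `X λ` increase to `‖φ‖₂²`, so the
integrals over the complements, i.e. `‖φ - φ·χ_{X λ}‖₂²`, tend to `0`.
-/

namespace MeasureTheory

variable {α ι : Type*} [MeasurableSpace α] {μ : Measure α} {s : ι → Set α}

theorem SimpleFunc.lintegral_eq_iSup_lintegral_restrict_of_directed (f : SimpleFunc α ℝ≥0∞)
    (hd : Directed (· ⊆ ·) s) (hμ : ∀ A, MeasurableSet A → μ A = ⨆ i, μ (A ∩ s i)) :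
    f.lintegral μ = ⨆ i, f.lintegral (μ.restrict (s i)) := by
  have hterm : ∀ c, c * μ (f ⁻¹' {c}) = ⨆ i, c * μ.restrict (s i) (f ⁻¹' {c}) := fun c => by
    simp only [Measure.restrict_apply (f.measurableSet_preimage _), ← ENNReal.mul_iSup,
      ← hμ _ (f.measurableSet_preimage _)]
  simp only [SimpleFunc.lintegral, hterm]
  refine ENNReal.finsetSum_iSup fun i j ↦ (hd i j).imp fun k ⟨hik, hjk⟩ c ↦ ?_
  constructor <;> gcongr

/-- No measurability of `f` is needed: `∫⁻` is itself a supremum over simple functions. -/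
theorem lintegral_eq_iSup_setLIntegral_of_directed (hd : Directed (· ⊆ ·) s)
    (hμ : ∀ A, MeasurableSet A → μ A = ⨆ i, μ (A ∩ s i)) (f : α → ℝ≥0∞) :
    ∫⁻ x, f x ∂μ = ⨆ i, ∫⁻ x in s i, f x ∂μ := by
  refine le_antisymm ?_ (iSup_le fun i => lintegral_mono' Measure.restrict_le_self le_rfl)
  rw [lintegral_def]
  refine iSup₂_le fun g hg => ?_
  rw [g.lintegral_eq_iSup_lintegral_restrict_of_directed hd hμ]
  gcongr with i
  rw [← g.lintegral_eq_lintegral]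
  exact lintegral_mono hg

theorem tendsto_setLIntegral_compl_zero [Preorder ι] [IsDirectedOrder ι] (hs : Monotone s)
    (hsm : ∀ i, MeasurableSet (s i)) (hμ : ∀ A, MeasurableSet A → μ A = ⨆ i, μ (A ∩ s i))
    {f : α → ℝ≥0∞} (hf : ∫⁻ x, f x ∂μ ≠ ∞) :
    Tendsto (fun i => ∫⁻ x in (s i)ᶜ, f x ∂μ) atTop (𝓝 0) := by
  have hsup := lintegral_eq_iSup_setLIntegral_of_directed hs.directed_le hμ f
  have hmono : Monotone fun i => ∫⁻ x in s i, f x ∂μ := fun i j hij =>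
    lintegral_mono' (Measure.restrict_mono (hs hij) le_rfl) le_rfl
  have hlim : Tendsto (fun i => ∫⁻ x in s i, f x ∂μ) atTop (𝓝 (∫⁻ x, f x ∂μ)) :=
    hsup ▸ tendsto_atTop_iSup hmono
  have hfin : ∀ i, ∫⁻ x in s i, f x ∂μ ≠ ∞ := fun i =>
    ne_top_of_le_ne_top hf (setLIntegral_le_lintegral _ _)
  simp_rw [setLIntegral_compl (hsm _) (hfin _)]
  simpa using ENNReal.Tendsto.sub tendsto_const_nhds hlim (Or.inl hf)

theorem tendsto_eLpNorm_indicator_compl_zero [Preorder ι] [IsDirectedOrder ι] {E : Type*}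
    [NormedAddCommGroup E] {p : ℝ≥0∞} (hp0 : p ≠ 0) (hptop : p ≠ ∞) (hs : Monotone s)
    (hsm : ∀ i, MeasurableSet (s i)) (hμ : ∀ A, MeasurableSet A → μ A = ⨆ i, μ (A ∩ s i))
    {f : α → E} (hf : MemLp f p μ) :
    Tendsto (fun i => eLpNorm ((s i)ᶜ.indicator f) p μ) atTop (𝓝 0) := by
  have hint : ∫⁻ x, ‖f x‖ₑ ^ p.toReal ∂μ ≠ ∞ :=
    (lintegral_rpow_enorm_lt_top_of_eLpNorm_lt_top hp0 hptop hf.eLpNorm_lt_top).ne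
  simp_rw [eLpNorm_indicator_eq_eLpNorm_restrict (hsm _).compl,
    eLpNorm_eq_lintegral_rpow_enorm_toReal hp0 hptop]
  have hpos : 0 < 1 / p.toReal := one_div_pos.2 (ENNReal.toReal_pos hp0 hptop)
  have hlim := (tendsto_setLIntegral_compl_zero hs hsm hμ hint).ennrpow_const (1 / p.toReal)
  rwa [ENNReal.zero_rpow_of_pos hpos] at hlim

end MeasureTheory

theorem truncations_tendsto_L2_general {Λ E : Type*} [Preorder Λ] [MeasurableSpace E]
    (hdir : ∀ a b : Λ, ∃ c, a ≤ c ∧ b ≤ c)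
    (X : Λ → Set E) (μt : Measure E)
    (hX : ∀ l, MeasurableSet (X l))
    (hmonoX : ∀ {a b : Λ}, a ≤ b → X a ⊆ X b)
    (hsup : ∀ A : Set E, MeasurableSet A → μt A = ⨆ l, μt (A ∩ X l)) :
    ∀ φ : Lp ℂ 2 μt,
      Tendsto (fun l => eLpNorm (⇑φ - (X l).indicator ⇑φ) 2 μt) atTop (𝓝 0) := by
  intro φ
  have : IsDirectedOrder Λ := ⟨hdir⟩
  simp_rw [← Set.indicator_compl]
  exact tendsto_eLpNorm_indicator_compl_zero two_ne_zero ENNReal.ofNat_ne_top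
    (fun _ _ => hmonoX) hX hsup (Lp.memLp φ)

/-- Let `(X, Ω̃, μ̃)` be the measure space extension of the inductive limit of a
strictly inductive system of measure spaces, so that `μ̃(A) = ⨆_λ μ̃(A ∩ X_λ)` for measurable
`A`, the `X_λ` increase along the directed set and cover `X`. Then for every
`φ ∈ L²(X, μ̃)`, the truncations `φ·χ_{X_λ}` converge to `φ` in `L²`-norm along `Λ`
(equivalently, the functions supported on some `X_λ` are dense in `L²(X, μ̃)`). -/
theorem truncations_tendsto_L2 {Λ E : Type*} [Preorder Λ] [Nonempty Λ] [MeasurableSpace E]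
    (hdir : ∀ a b : Λ, ∃ c, a ≤ c ∧ b ≤ c)
    (X : Λ → Set E) (μt : Measure E)
    (hX : ∀ l, MeasurableSet (X l))
    (hmonoX : ∀ {a b : Λ}, a ≤ b → X a ⊆ X b)
    (hcover : (⋃ l, X l) = Set.univ)
    (hsup : ∀ A : Set E, MeasurableSet A → μt A = ⨆ l, μt (A ∩ X l)) :
    ∀ φ : Lp ℂ 2 μt,
      Tendsto (fun l => eLpNorm (⇑φ - (X l).indicator ⇑φ) 2 μt) atTop (𝓝 0) :=
  truncations_tendsto_L2_general hdir X μt hX hmonoX hsup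
end

section
/- Let T ∈ B_loc(H) be a locally bounded operator on a locally Hilbert space H, and suppose there exists a linear map S : H → H with TS = ST = I_H. Then S is also locally bounded. -/
local notation "⟪" x ", " y "⟫" => @inner ℂ _ _ x y

/-- A linear map `T` on a locally Hilbert space `H = ⋃ H_λ` is locally bounded if, for every
`λ`, `T` leaves `H_λ` and `H_λ^⊥` invariant and `T|_{H_λ}` is bounded. -/
def IsLocallyBounded {Λ H : Type*} [Preorder Λ]
    [NormedAddCommGroup H] [InnerProductSpace ℂ H]
    (Hs : Λ → Submodule ℂ H) (T : H →ₗ[ℂ] H) : Prop :=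
  ∀ l : Λ,
    (∀ h ∈ Hs l, T h ∈ Hs l) ∧
    (∀ h : H, (∀ u ∈ Hs l, ⟪u, h⟫ = 0) → ∀ u ∈ Hs l, ⟪u, T h⟫ = 0) ∧
    (∃ C : ℝ, ∀ h ∈ Hs l, ‖T h‖ ≤ C * ‖h‖)

/-!
Write `K = H_λ`. If `T` is injective and leaves both `K` and `Kᗮ` invariant, then `T y ∈ K` forces
`y ∈ K`: splitting `y = p + q` along `K ⊕ Kᗮ`, the vector `T q = T y - T p` lies in `K ∩ Kᗮ = 0`.
Applied to `y = S x`, and to `Kᗮ` in place of `K`, this shows that `S` leaves `K` and `Kᗮ`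
invariant. On the Hilbert space `K` the restriction of `T` is then a bounded bijection, so its
inverse, the restriction of `S`, is bounded by the open mapping theorem.
-/

namespace Submodule

variable {𝕜 E : Type*} [RCLike 𝕜] [NormedAddCommGroup E] [InnerProductSpace 𝕜 E]

theorem mem_of_apply_mem_of_mapsTo_orthogonal {K : Submodule 𝕜 E} [K.HasOrthogonalProjection]
    {T : E →ₗ[𝕜] E} (hT : Function.Injective T) (hTK : ∀ x ∈ K, T x ∈ K)
    (hTKperp : ∀ x ∈ Kᗮ, T x ∈ Kᗮ) {y : E} (hy : T y ∈ K) : y ∈ K := by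
  obtain ⟨p, hp, q, hq, rfl⟩ := K.exists_add_mem_mem_orthogonal y
  have hTqK : T q ∈ K := by
    simpa only [map_add, add_sub_cancel_left] using K.sub_mem hy (hTK p hp)
  have hTq : T q = 0 := disjoint_def.1 K.orthogonal_disjoint _ hTqK (hTKperp q hq)
  rw [hT (hTq.trans (map_zero T).symm), add_zero]
  exact hp

end Submodule

theorem LinearMap.exists_bound_of_inverse_of_bound {𝕜 E F : Type*} [NontriviallyNormedField 𝕜]
    [NormedAddCommGroup E] [NormedSpace 𝕜 E] [CompleteSpace E]
    [NormedAddCommGroup F] [NormedSpace 𝕜 F] [CompleteSpace F]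
    (T : E →ₗ[𝕜] F) (S : F →ₗ[𝕜] E) (hTS : T ∘ₗ S = LinearMap.id) (hST : S ∘ₗ T = LinearMap.id)
    {C : ℝ} (hC : ∀ x, ‖T x‖ ≤ C * ‖x‖) : ∃ C', ∀ y, ‖S y‖ ≤ C' * ‖y‖ := by
  let e := (LinearEquiv.ofLinearMap T S hTS hST).toContinuousLinearEquivOfContinuous
    (AddMonoidHomClass.continuous_of_bound T C hC)
  obtain ⟨C', -, hC'⟩ := SemilinearMapClass.bound_of_continuous e.symm e.symm.continuous
  exact ⟨C', hC'⟩

theorem inverse_is_locally_bounded_general {Λ H : Type*} [Preorder Λ]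
    [NormedAddCommGroup H] [InnerProductSpace ℂ H]
    (Hs : Λ → Submodule ℂ H)
    (hcomplete : ∀ l, IsComplete (Hs l : Set H))
    (T S : H →ₗ[ℂ] H)
    (hT : IsLocallyBounded Hs T)
    (hTS : T ∘ₗ S = LinearMap.id)
    (hST : S ∘ₗ T = LinearMap.id) :
    IsLocallyBounded Hs S := by
  have hTinj : Function.Injective T := Function.LeftInverse.injective (LinearMap.congr_fun hST)
  have hTS_apply (x : H) : T (S x) = x := LinearMap.congr_fun hTS x
  intro l
  obtain ⟨hTK, hTKperp, C, hC⟩ := hT l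
  have : CompleteSpace (Hs l) := (hcomplete l).completeSpace_coe
  replace hTKperp : ∀ x ∈ (Hs l)ᗮ, T x ∈ (Hs l)ᗮ := by
    simpa only [← Submodule.mem_orthogonal] using hTKperp
  have hSK (x : H) (hx : x ∈ Hs l) : S x ∈ Hs l :=
    (Hs l).mem_of_apply_mem_of_mapsTo_orthogonal hTinj hTK hTKperp (by rwa [hTS_apply])
  have hSKperp (x : H) (hx : x ∈ (Hs l)ᗮ) : S x ∈ (Hs l)ᗮ :=
    (Hs l)ᗮ.mem_of_apply_mem_of_mapsTo_orthogonal hTinj hTKperp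
      (by rwa [Submodule.orthogonal_orthogonal]) (by rwa [hTS_apply])
  refine ⟨hSK, fun x hx ↦ (Submodule.mem_orthogonal _ _).1 <|
    hSKperp x ((Submodule.mem_orthogonal _ _).2 hx), ?_⟩
  obtain ⟨C', hC'⟩ := LinearMap.exists_bound_of_inverse_of_bound (T.restrict hTK) (S.restrict hSK)
    (LinearMap.ext fun x ↦ Subtype.ext (hTS_apply x))
    (LinearMap.ext fun x ↦ Subtype.ext (LinearMap.congr_fun hST x)) (fun x ↦ hC x x.2)
  exact ⟨C', fun x hx ↦ hC' ⟨x, hx⟩⟩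

/-- If `T` is a locally bounded operator on a locally Hilbert space and
`S : H → H` is a linear map with `TS = ST = I`, then `S` is locally bounded. -/
theorem inverse_is_locally_bounded {Λ H : Type*} [Preorder Λ] [Nonempty Λ]
    [NormedAddCommGroup H] [InnerProductSpace ℂ H]
    (hdir : ∀ a b : Λ, ∃ c, a ≤ c ∧ b ≤ c)
    (Hs : Λ → Submodule ℂ H)
    (hmono : ∀ {a b : Λ}, a ≤ b → Hs a ≤ Hs b)
    (hcover : ∀ h : H, ∃ l, h ∈ Hs l)
    (hcomplete : ∀ l, IsComplete (Hs l : Set H))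
    (T S : H →ₗ[ℂ] H)
    (hT : IsLocallyBounded Hs T)
    (hTS : T ∘ₗ S = LinearMap.id)
    (hST : S ∘ₗ T = LinearMap.id) :
    IsLocallyBounded Hs S :=
  inverse_is_locally_bounded_general Hs hcomplete T S hT hTS hST
end

section
/- Let T = proj-lim T_λ ∈ B_loc(H) be a locally bounded operator on a locally Hilbert space H = ⋃_λ H_λ. Then the resolvent set satisfies ρ(T) = ⋂_{λ∈Λ} ρ(T_λ) and the spectrum satisfies σ(T) = ⋃_{λ∈Λ} σ(T_λ), where ρ(T_λ), σ(T_λ) are the usual resolvent set and spectrum of the bounded operator T_λ on the Hilbert space H_λ. -/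
/-!
If every `z - T_λ` is invertible, then `A = z - T` is a bijection of `H = ⋃ H_λ`, and its inverse `S`
maps each `H_λ` onto itself. `S` also preserves `H_λᗮ`: writing `S h = u + v` with `u ∈ H_λ` and
`v ∈ H_λᗮ`, the vector `A u = h - A v` lies in `H_λ ∩ H_λᗮ = 0`, so `u = 0`. Finally `S` is bounded on
each `H_λ` by the open mapping theorem, since `H_λ` is complete and `A` is bounded there. Conversely,
a locally bounded inverse of `z - T` restricts to an inverse of every `z - T_λ`.
-/

local notation "⟪" x ", " y "⟫" => @inner ℂ _ _ x y

open Function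

theorem Submodule.mem_orthogonal_of_apply_mem_orthogonal {𝕜 E : Type*} [RCLike 𝕜]
    [NormedAddCommGroup E] [InnerProductSpace 𝕜 E] (K : Submodule 𝕜 E)
    [K.HasOrthogonalProjection] {A : E →ₗ[𝕜] E} (hA : Injective A)
    (hK : ∀ x ∈ K, A x ∈ K) (hKperp : ∀ x ∈ Kᗮ, A x ∈ Kᗮ) {y : E} (hy : A y ∈ Kᗮ) :
    y ∈ Kᗮ := by
  set u := K.starProjection y
  have hv : y - u ∈ Kᗮ := K.sub_starProjection_mem_orthogonal y
  have hAu : A u ∈ K ⊓ Kᗮ := by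
    refine ⟨hK u (K.starProjection_apply_mem y), ?_⟩
    rw [show A u = A y - A (y - u) by rw [map_sub, sub_sub_cancel]]
    exact Kᗮ.sub_mem hy (hKperp _ hv)
  rw [K.inf_orthogonal_eq_bot, Submodule.mem_bot, ← map_zero A] at hAu
  simpa [hA hAu] using hv

theorem LinearMap.exists_norm_le_mul_norm_apply_of_bijective {𝕜 E F : Type*}
    [NontriviallyNormedField 𝕜] [NormedAddCommGroup E] [NormedSpace 𝕜 E] [CompleteSpace E]
    [NormedAddCommGroup F] [NormedSpace 𝕜 F] [CompleteSpace F] (f : E →ₗ[𝕜] F) {C : ℝ}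
    (hC : ∀ x, ‖f x‖ ≤ C * ‖x‖) (hf : Bijective f) : ∃ K : ℝ, ∀ x, ‖x‖ ≤ K * ‖f x‖ := by
  obtain ⟨-, K, hK⟩ :=
    (ContinuousLinearMap.bijective_iff_dense_range_and_antilipschitz (f.mkContinuous C hC)).1 hf
  exact ⟨K, ZeroHomClass.bound_of_antilipschitz _ hK⟩

section Restrict

variable {R M ι : Type*} [Ring R] [AddCommGroup M] [Module R M]

theorem LinearMap.bijective_restrict_of_inverse {f g : M →ₗ[R] M}
    (hfg : f ∘ₗ g = LinearMap.id) (hgf : g ∘ₗ f = LinearMap.id) {p : Submodule R M}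
    (hf : ∀ x ∈ p, f x ∈ p) (hg : ∀ x ∈ p, g x ∈ p) : Bijective (f.restrict hf) := by
  refine ⟨fun x y hxy => Subtype.ext ?_, fun y => ⟨⟨g y, hg y y.2⟩, Subtype.ext ?_⟩⟩
  · simpa [← LinearMap.comp_apply, hgf] using congrArg (fun v : p => g v) hxy
  · exact LinearMap.congr_fun hfg y

theorem LinearMap.bijective_of_bijective_restrict {p : ι → Submodule R M}
    (hcover : ∀ x, ∃ i, x ∈ p i) {f : M →ₗ[R] M} (hf : ∀ i, ∀ x ∈ p i, f x ∈ p i)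
    (hbij : ∀ i, Bijective (f.restrict (hf i))) : Bijective f := by
  refine ⟨(injective_iff_map_eq_zero f).2 fun x hx => ?_, fun y => ?_⟩
  · obtain ⟨i, hi⟩ := hcover x
    have : f.restrict (hf i) ⟨x, hi⟩ = 0 := Subtype.ext hx
    simpa using congrArg Subtype.val ((injective_iff_map_eq_zero _).1 (hbij i).1 _ this)
  · obtain ⟨i, hi⟩ := hcover y
    obtain ⟨x, hx⟩ := (hbij i).2 ⟨y, hi⟩
    exact ⟨x, congrArg Subtype.val hx⟩

end Restrict

section LocallyBounded

variable {Λ H : Type*} [Preorder Λ] [NormedAddCommGroup H] [InnerProductSpace ℂ H]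
  {Hs : Λ → Submodule ℂ H}

theorem isLocallyBounded_id : IsLocallyBounded Hs LinearMap.id :=
  fun _ => ⟨fun _ hh => hh, fun _ hh => hh, 1, fun _ _ => by simp⟩

namespace IsLocallyBounded

theorem smul {T : H →ₗ[ℂ] H} (hT : IsLocallyBounded Hs T) (c : ℂ) :
    IsLocallyBounded Hs (c • T) := by
  intro l
  obtain ⟨hmem, horth, C, hC⟩ := hT l
  refine ⟨fun h hh => (Hs l).smul_mem c (hmem h hh),
    fun h hh => (Hs l)ᗮ.smul_mem c (horth h hh), ‖c‖ * C, fun h hh => ?_⟩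
  rw [LinearMap.smul_apply, norm_smul, mul_assoc]
  exact mul_le_mul_of_nonneg_left (hC h hh) (norm_nonneg c)

theorem sub {S T : H →ₗ[ℂ] H} (hS : IsLocallyBounded Hs S) (hT : IsLocallyBounded Hs T) :
    IsLocallyBounded Hs (S - T) := by
  intro l
  obtain ⟨hmemS, horthS, C, hC⟩ := hS l
  obtain ⟨hmemT, horthT, D, hD⟩ := hT l
  refine ⟨fun h hh => (Hs l).sub_mem (hmemS h hh) (hmemT h hh),
    fun h hh => (Hs l)ᗮ.sub_mem (horthS h hh) (horthT h hh), C + D, fun h hh => ?_⟩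
  calc ‖(S - T) h‖ ≤ ‖S h‖ + ‖T h‖ := norm_sub_le _ _
    _ ≤ C * ‖h‖ + D * ‖h‖ := add_le_add (hC h hh) (hD h hh)
    _ = (C + D) * ‖h‖ := by ring

theorem of_inverse (hcomplete : ∀ l, IsComplete (Hs l : Set H)) {A S : H →ₗ[ℂ] H}
    (hA : IsLocallyBounded Hs A) (hAS : A ∘ₗ S = LinearMap.id) (hSA : S ∘ₗ A = LinearMap.id)
    (hS : ∀ l, ∀ h ∈ Hs l, S h ∈ Hs l) : IsLocallyBounded Hs S := by
  intro l
  have : CompleteSpace (Hs l) := (hcomplete l).completeSpace_coe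
  obtain ⟨hmem, horth, C, hC⟩ := hA l
  have hAS_apply (h : H) : A (S h) = h := LinearMap.congr_fun hAS h
  refine ⟨hS l, fun h hh => ?_, ?_⟩
  · have hinj : Injective A := LeftInverse.injective (LinearMap.congr_fun hSA)
    exact (Hs l).mem_orthogonal_of_apply_mem_orthogonal hinj hmem horth (by rwa [hAS_apply])
  · obtain ⟨K, hK⟩ := (A.restrict hmem).exists_norm_le_mul_norm_apply_of_bijective
      (C := C) (fun x => hC x x.2) (LinearMap.bijective_restrict_of_inverse hAS hSA hmem (hS l))
    refine ⟨K, fun h hh => ?_⟩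
    simpa [hAS_apply] using hK ⟨S h, hS l h hh⟩

theorem exists_inverse_iff (hcover : ∀ h : H, ∃ l, h ∈ Hs l)
    (hcomplete : ∀ l, IsComplete (Hs l : Set H)) {A : H →ₗ[ℂ] H} (hA : IsLocallyBounded Hs A) :
    (∃ S : H →ₗ[ℂ] H, IsLocallyBounded Hs S ∧ A ∘ₗ S = LinearMap.id ∧ S ∘ₗ A = LinearMap.id) ↔
      ∀ l, IsUnit (A.restrict (hA l).1) := by
  simp_rw [Module.End.isUnit_iff]
  constructor
  · rintro ⟨S, hS, hAS, hSA⟩ l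
    exact LinearMap.bijective_restrict_of_inverse hAS hSA _ (hS l).1
  · intro hbij
    let e := LinearEquiv.ofBijective A (LinearMap.bijective_of_bijective_restrict hcover _ hbij)
    have hAS : A ∘ₗ e.symm = LinearMap.id := LinearMap.ext e.apply_symm_apply
    have hSA : e.symm ∘ₗ A = LinearMap.id := LinearMap.ext e.symm_apply_apply
    refine ⟨e.symm, of_inverse hcomplete hA hAS hSA fun l h hh => ?_, hAS, hSA⟩
    obtain ⟨x, hx⟩ := (hbij l).2 ⟨h, hh⟩
    rw [LinearEquiv.coe_coe, e.symm_apply_eq.2 (congrArg Subtype.val hx).symm]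
    exact x.2

end IsLocallyBounded

end LocallyBounded

theorem locally_bounded_spectrum_general {Λ H : Type*} [Preorder Λ]
    [NormedAddCommGroup H] [InnerProductSpace ℂ H]
    (Hs : Λ → Submodule ℂ H)
    (hcover : ∀ h : H, ∃ l, h ∈ Hs l)
    (hcomplete : ∀ l, IsComplete (Hs l : Set H))
    (T : H →ₗ[ℂ] H)
    (hT : IsLocallyBounded Hs T) :
    ({z : ℂ | ∃ S : H →ₗ[ℂ] H, IsLocallyBounded Hs S ∧
        (z • (LinearMap.id : H →ₗ[ℂ] H) - T) ∘ₗ S = LinearMap.id ∧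
        S ∘ₗ (z • (LinearMap.id : H →ₗ[ℂ] H) - T) = LinearMap.id}
      = ⋂ l, resolventSet ℂ
          (LinearMap.restrict T (fun x hx => (hT l).1 x hx) : Module.End ℂ (Hs l))) ∧
    ({z : ℂ | ∃ S : H →ₗ[ℂ] H, IsLocallyBounded Hs S ∧
        (z • (LinearMap.id : H →ₗ[ℂ] H) - T) ∘ₗ S = LinearMap.id ∧
        S ∘ₗ (z • (LinearMap.id : H →ₗ[ℂ] H) - T) = LinearMap.id}ᶜ
      = ⋃ l, spectrum ℂ
          (LinearMap.restrict T (fun x hx => (hT l).1 x hx) : Module.End ℂ (Hs l))) := by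
  have hA (z : ℂ) : IsLocallyBounded Hs (z • LinearMap.id - T) :=
    (isLocallyBounded_id.smul z).sub hT
  have hρ : {z : ℂ | ∃ S : H →ₗ[ℂ] H, IsLocallyBounded Hs S ∧
        (z • (LinearMap.id : H →ₗ[ℂ] H) - T) ∘ₗ S = LinearMap.id ∧
        S ∘ₗ (z • (LinearMap.id : H →ₗ[ℂ] H) - T) = LinearMap.id}
      = ⋂ l, resolventSet ℂ (T.restrict fun x hx => (hT l).1 x hx) := by
    ext z
    rw [Set.mem_ofPred_eq, (hA z).exists_inverse_iff hcover hcomplete, Set.mem_iInter]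
    simp only [spectrum.mem_resolventSet_iff]
    -- `algebraMap ℂ _ z - T_λ` is definitionally the restriction of `z • id - T` to `H_λ`
    exact Iff.rfl
  exact ⟨hρ, by rw [hρ, Set.compl_iInter]; rfl⟩

/-- For `T = proj-lim T_λ ∈ B_loc(H)` on a locally Hilbert space `H = ⋃ H_λ`,
the resolvent set (invertibility of `zI − T` within the locally bounded operators) equals
`⋂_λ ρ(T_λ)` and the spectrum equals `⋃_λ σ(T_λ)`, where `T_λ = T|_{H_λ}`. -/
theorem locally_bounded_spectrum {Λ H : Type*} [Preorder Λ] [Nonempty Λ]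
    [NormedAddCommGroup H] [InnerProductSpace ℂ H]
    (hdir : ∀ a b : Λ, ∃ c, a ≤ c ∧ b ≤ c)
    (Hs : Λ → Submodule ℂ H)
    (hmono : ∀ {a b : Λ}, a ≤ b → Hs a ≤ Hs b)
    (hcover : ∀ h : H, ∃ l, h ∈ Hs l)
    (hcomplete : ∀ l, IsComplete (Hs l : Set H))
    (T : H →ₗ[ℂ] H)
    (hT : IsLocallyBounded Hs T) :
    ({z : ℂ | ∃ S : H →ₗ[ℂ] H, IsLocallyBounded Hs S ∧
        (z • (LinearMap.id : H →ₗ[ℂ] H) - T) ∘ₗ S = LinearMap.id ∧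
        S ∘ₗ (z • (LinearMap.id : H →ₗ[ℂ] H) - T) = LinearMap.id}
      = ⋂ l, resolventSet ℂ
          (LinearMap.restrict T (fun x hx => (hT l).1 x hx) : Module.End ℂ (Hs l))) ∧
    ({z : ℂ | ∃ S : H →ₗ[ℂ] H, IsLocallyBounded Hs S ∧
        (z • (LinearMap.id : H →ₗ[ℂ] H) - T) ∘ₗ S = LinearMap.id ∧
        S ∘ₗ (z • (LinearMap.id : H →ₗ[ℂ] H) - T) = LinearMap.id}ᶜ
      = ⋃ l, spectrum ℂ
          (LinearMap.restrict T (fun x hx => (hT l).1 x hx) : Module.End ℂ (Hs l))) :=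
  locally_bounded_spectrum_general Hs hcover hcomplete T hT
end
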